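/- (Hyperbolic SVD, real case) Let n = p + q. For any n×n real invertible matrix G there exist an orthogonal matrix O ∈ O(n), an indefinite orthogonal matrix V satisfying Vᵀ I_{p,q} V = I_{p,q}, and a positive diagonal matrix Σ, such that G = O Σ V. -/
import Mathlib

open Matrix Module Submodule

namespace HypSVD

variable {n : ℕ}

lemma conj_dot (B M : Matrix (Fin n) (Fin n) ℝ) (x : Fin n → ℝ) :
    x ⬝ᵥ (B * M * Bᵀ) *ᵥ x = (Bᵀ *ᵥ x) ⬝ᵥ M *ᵥ (Bᵀ *ᵥ x) := by
  rw [← Matrix.mulVec_mulVec, ← Matrix.mulVec_mulVec, Matrix.dotProduct_mulVec,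
    ← Matrix.mulVec_transpose]

noncomputable def coordSpan (P : Fin n → Prop) [DecidablePred P] : Submodule ℝ (Fin n → ℝ) :=
  Submodule.span ℝ (Set.range fun i : {i // P i} => ((Pi.single (i : Fin n) (1:ℝ) : Fin n → ℝ)))

lemma finrank_coordSpan (P : Fin n → Prop) [DecidablePred P] :
    finrank ℝ (coordSpan P) = Fintype.card {i // P i} := by
  have h : LinearIndependent ℝ fun i : {i // P i} => ((Pi.single (i : Fin n) (1:ℝ) : Fin n → ℝ)) := by
    have h0 := (Pi.basisFun ℝ (Fin n)).linearIndependent.comp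
      (fun i : {i // P i} => (i : Fin n)) Subtype.val_injective
    have : (fun i : {i // P i} => ((Pi.single (i : Fin n) (1:ℝ) : Fin n → ℝ)))
        = fun i : {i // P i} => Pi.basisFun ℝ (Fin n) (i : Fin n) := by
      funext i; simp
    rw [this]
    exact h0
  exact finrank_span_eq_card h

lemma coordSpan_apply_eq_zero {P : Fin n → Prop} [DecidablePred P] {x : Fin n → ℝ}
    (hx : x ∈ coordSpan P) {j : Fin n} (hj : ¬ P j) : x j = 0 := by
  induction hx using Submodule.span_induction with
  | mem y h =>
    obtain ⟨i, rfl⟩ := h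
    refine Pi.single_eq_of_ne (fun hij : j = (i : Fin n) => hj ?_) 1
    rw [hij]; exact i.2
  | zero => rfl
  | add y z _ _ hy hz => simp [hy, hz]
  | smul a y _ hy => simp [hy]

lemma dot_diagonal (d : Fin n → ℝ) (c : Fin n → ℝ) :
    c ⬝ᵥ (diagonal d) *ᵥ c = ∑ i, d i * c i ^ 2 := by
  simp only [dotProduct, mulVec_diagonal]
  exact Finset.sum_congr rfl fun i _ => by ring

lemma pos_on {d : Fin n → ℝ} {P : Fin n → Prop} [DecidablePred P] (hd : ∀ i, P i → 0 < d i)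
    {c : Fin n → ℝ} (hc : c ∈ coordSpan P) (hc0 : c ≠ 0) :
    0 < c ⬝ᵥ (diagonal d) *ᵥ c := by
  rw [dot_diagonal]
  obtain ⟨j, hj⟩ := Function.ne_iff.mp hc0
  have hPj : P j := by
    by_contra h; exact hj (coordSpan_apply_eq_zero hc h)
  refine Finset.sum_pos' (fun i _ => ?_) ⟨j, Finset.mem_univ j, ?_⟩
  · by_cases h : P i
    · exact mul_nonneg (hd i h).le (sq_nonneg _)
    · simp [coordSpan_apply_eq_zero hc h]
  · have h2 : (0:ℝ) < c j ^ 2 := lt_of_le_of_ne (sq_nonneg _) (Ne.symm (pow_ne_zero 2 hj))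
    exact mul_pos (hd j hPj) h2

lemma nonpos_on {d : Fin n → ℝ} {P : Fin n → Prop} [DecidablePred P] (hd : ∀ i, P i → d i ≤ 0)
    {c : Fin n → ℝ} (hc : c ∈ coordSpan P) :
    c ⬝ᵥ (diagonal d) *ᵥ c ≤ 0 := by
  rw [dot_diagonal]
  refine Finset.sum_nonpos fun i _ => ?_
  by_cases h : P i
  · nlinarith [sq_nonneg (c i), hd i h]
  · simp [coordSpan_apply_eq_zero hc h]

lemma finrank_comap_coordSpan (M : Matrix (Fin n) (Fin n) ℝ) (hM : IsUnit M.det)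
    (P : Fin n → Prop) [DecidablePred P] :
    finrank ℝ (Submodule.comap (Matrix.toLin' M) (coordSpan P)) = Fintype.card {i // P i} := by
  have hi : Invertible M := M.invertibleOfIsUnitDet hM
  have h1 : Submodule.comap (Matrix.toLin' M) (coordSpan P)
      = Submodule.comap ((M.toLinearEquiv' hi : (Fin n → ℝ) ≃ₗ[ℝ] (Fin n → ℝ)) :
          (Fin n → ℝ) →ₗ[ℝ] (Fin n → ℝ)) (coordSpan P) := by
    rw [Matrix.toLinearEquiv'_apply]
  rw [h1, Submodule.comap_equiv_eq_map_symm, LinearEquiv.finrank_map_eq, finrank_coordSpan]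

lemma dim_bound (A : Matrix (Fin n) (Fin n) ℝ) (W1 W2 : Submodule ℝ (Fin n → ℝ))
    (h1 : ∀ x ∈ W1, x ≠ 0 → 0 < x ⬝ᵥ A *ᵥ x) (h2 : ∀ x ∈ W2, x ⬝ᵥ A *ᵥ x ≤ 0) :
    finrank ℝ W1 + finrank ℝ W2 ≤ n := by
  have hinf : W1 ⊓ W2 = ⊥ := by
    rw [eq_bot_iff]
    intro x hx
    rw [Submodule.mem_bot]
    by_contra hx0
    exact absurd (h1 x hx.1 hx0) (not_lt.mpr (h2 x hx.2))
  have h := Submodule.finrank_sup_add_finrank_inf_eq W1 W2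
  rw [hinf, finrank_bot, add_zero] at h
  calc finrank ℝ W1 + finrank ℝ W2 = finrank ℝ ((W1 ⊔ W2 : Submodule ℝ (Fin n → ℝ))) := h.symm
    _ ≤ finrank ℝ (Fin n → ℝ) := Submodule.finrank_le _
    _ = n := by simp


lemma card_le {A B C : Matrix (Fin n) (Fin n) ℝ} {b c : Fin n → ℝ}
    (hB : IsUnit B.det) (hC : IsUnit C.det)
    (hAB : A = B * diagonal b * Bᵀ) (hAC : A = C * diagonal c * Cᵀ) :
    Fintype.card {i // 0 < b i} + Fintype.card {i // c i ≤ 0} ≤ n := by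
  classical
  set W1 := Submodule.comap (Matrix.toLin' Bᵀ) (coordSpan (fun i => 0 < b i)) with hW1
  set W2 := Submodule.comap (Matrix.toLin' Cᵀ) (coordSpan (fun i => c i ≤ 0)) with hW2
  have hBt : IsUnit Bᵀ.det := by rwa [Matrix.det_transpose]
  have hCt : IsUnit Cᵀ.det := by rwa [Matrix.det_transpose]
  have h1 : ∀ x ∈ W1, x ≠ 0 → 0 < x ⬝ᵥ A *ᵥ x := by
    intro x hx hx0
    rw [hAB, conj_dot]
    have hmem : Bᵀ *ᵥ x ∈ coordSpan (fun i => 0 < b i) := by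
      simpa [hW1, Matrix.toLin'_apply] using hx
    have hne : Bᵀ *ᵥ x ≠ 0 := by
      intro h0
      apply hx0
      have h3 := congrArg (fun y => (Bᵀ)⁻¹ *ᵥ y) h0
      simpa [Matrix.mulVec_mulVec, Matrix.nonsing_inv_mul _ hBt] using h3
    exact pos_on (fun i hi => hi) hmem hne
  have h2 : ∀ x ∈ W2, x ⬝ᵥ A *ᵥ x ≤ 0 := by
    intro x hx
    rw [hAC, conj_dot]
    have hmem : Cᵀ *ᵥ x ∈ coordSpan (fun i => c i ≤ 0) := by
      simpa [hW2, Matrix.toLin'_apply] using hx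
    exact nonpos_on (fun i hi => hi) hmem
  have hdb := dim_bound A W1 W2 h1 h2
  rwa [hW1, hW2, finrank_comap_coordSpan _ hBt, finrank_comap_coordSpan _ hCt] at hdb

lemma inertia (p q : ℕ) (G : Matrix (Fin (p+q)) (Fin (p+q)) ℝ) (hG : IsUnit G.det)
    (U : Matrix (Fin (p+q)) (Fin (p+q)) ℝ) (hU : IsUnit U.det) (d : Fin (p+q) → ℝ)
    (hd : ∀ i, d i ≠ 0)
    (hspec : U * diagonal d * Uᵀ
      = G * diagonal (fun i : Fin (p+q) => if (i:ℕ) < p then (1:ℝ) else -1) * Gᵀ) :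
    Fintype.card {i // 0 < d i} = p := by
  classical
  have hcp : Fintype.card {i : Fin (p+q) // (i:ℕ) < p} = p := by
    have e : {i : Fin (p+q) // (i:ℕ) < p} ≃ Fin p :=
      ⟨fun i => ⟨i.1.1, i.2⟩,
        fun i => ⟨⟨i.1, lt_of_lt_of_le i.2 (Nat.le_add_right p q)⟩, i.2⟩,
        fun i => rfl, fun i => rfl⟩
    rw [Fintype.card_congr e, Fintype.card_fin]
  have hcnp : Fintype.card {i : Fin (p+q) // ¬ (i:ℕ) < p} = q := by
    have h := Fintype.card_subtype_compl (fun i : Fin (p+q) => (i:ℕ) < p)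
    rw [hcp, Fintype.card_fin] at h
    omega
  have h1 : Fintype.card {i // 0 < d i}
      + Fintype.card {i : Fin (p+q) // (if (i:ℕ) < p then (1:ℝ) else -1) ≤ 0} ≤ p + q :=
    card_le hU hG rfl hspec
  have h2 : Fintype.card {i // 0 < (-d) i}
      + Fintype.card {i : Fin (p+q) // (-(fun i : Fin (p+q) => if (i:ℕ) < p then (1:ℝ) else -1)) i ≤ 0} ≤ p + q :=
    card_le (A := -(U * diagonal d * Uᵀ)) hU hG
      (by rw [show Matrix.diagonal (-d) = -Matrix.diagonal d by simp, mul_neg, neg_mul])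
      (by rw [hspec,
        show Matrix.diagonal (-(fun i : Fin (p+q) => if (i:ℕ) < p then (1:ℝ) else -1))
          = -Matrix.diagonal (fun i : Fin (p+q) => if (i:ℕ) < p then (1:ℝ) else -1) by simp,
        mul_neg, neg_mul])
  have e1 : Fintype.card {i : Fin (p+q) // (if (i:ℕ) < p then (1:ℝ) else -1) ≤ 0} = q := by
    rw [Fintype.card_congr (Equiv.subtypeEquivRight (q := fun i : Fin (p+q) => ¬ (i:ℕ) < p)
      (fun i => by by_cases h : (i:ℕ) < p <;> simp [h]))]
    exact hcnp
  have e2 : Fintype.card {i : Fin (p+q) // (-(fun i : Fin (p+q) => if (i:ℕ) < p then (1:ℝ) else -1)) i ≤ 0} = p := by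
    rw [Fintype.card_congr (Equiv.subtypeEquivRight (q := fun i : Fin (p+q) => (i:ℕ) < p)
      (fun i => by by_cases h : (i:ℕ) < p <;> simp [h]))]
    exact hcp
  have e3 : Fintype.card {i // 0 < (-d) i} = Fintype.card {i // d i < 0} :=
    Fintype.card_congr (Equiv.subtypeEquivRight (fun i => by simp))
  have e4 : Fintype.card {i // d i < 0} = (p + q) - Fintype.card {i // 0 < d i} := by
    have h := Fintype.card_subtype_compl (fun i : Fin (p+q) => 0 < d i)
    rw [Fintype.card_fin] at h
    have e5 : Fintype.card {i // d i < 0} = Fintype.card {i : Fin (p+q) // ¬ 0 < d i} :=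
      Fintype.card_congr (Equiv.subtypeEquivRight (fun i => by
        constructor
        · intro hlt; exact not_lt.mpr hlt.le
        · intro hle; exact lt_of_le_of_ne (not_lt.mp hle) (hd i)))
    rw [e5, h]
  have hle : Fintype.card {i // 0 < d i} ≤ p + q := by
    have h := Fintype.card_subtype_le (fun i : Fin (p+q) => 0 < d i)
    rwa [Fintype.card_fin] at h
  rw [e1] at h1
  rw [e2, e3, e4] at h2
  omega


lemma perm_exists (p q : ℕ) (d : Fin (p+q) → ℝ)
    (hP : Fintype.card {i // 0 < d i} = p) :
    ∃ e : Fin (p+q) ≃ Fin (p+q), ∀ i, (0 < d (e i) ↔ (i:ℕ) < p) := by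
  classical
  have hN : Fintype.card {i // ¬ 0 < d i} = q := by
    have h := Fintype.card_subtype_compl (fun i : Fin (p+q) => 0 < d i)
    rw [hP, Fintype.card_fin] at h
    have h2 := Fintype.card_subtype_le (fun i : Fin (p+q) => 0 < d i)
    rw [Fintype.card_fin] at h2
    omega
  have epos : Fin p ≃ {i // 0 < d i} := (Fintype.equivFinOfCardEq hP).symm
  have eneg : Fin q ≃ {i // ¬ 0 < d i} := (Fintype.equivFinOfCardEq hN).symm
  refine ⟨finSumFinEquiv.symm.trans ((epos.sumCongr eneg).trans
    (Equiv.sumCompl fun i => 0 < d i)), fun i => ?_⟩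
  rcases h : finSumFinEquiv.symm i with a | b
  · have hi : (i:ℕ) < p := by
      have h2 : i = finSumFinEquiv (Sum.inl a) := by
        rw [← h, Equiv.apply_symm_apply]
      rw [h2, finSumFinEquiv_apply_left]
      exact a.isLt
    have hv : 0 < d ((finSumFinEquiv.symm.trans ((epos.sumCongr eneg).trans
        (Equiv.sumCompl fun i => 0 < d i))) i) := by
      simp only [Equiv.trans_apply, h, Equiv.sumCongr_apply, Sum.map_inl,
        Equiv.sumCompl_apply_inl]
      exact (epos a).2
    exact iff_of_true hv hi
  · have hi : ¬ (i:ℕ) < p := by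
      have h2 : i = finSumFinEquiv (Sum.inr b) := by
        rw [← h, Equiv.apply_symm_apply]
      rw [h2, finSumFinEquiv_apply_right]
      simp [Fin.natAdd]
    have hv : ¬ 0 < d ((finSumFinEquiv.symm.trans ((epos.sumCongr eneg).trans
        (Equiv.sumCompl fun i => 0 < d i))) i) := by
      simp only [Equiv.trans_apply, h, Equiv.sumCongr_apply, Sum.map_inr,
        Equiv.sumCompl_apply_inr]
      exact (eneg b).2
    exact iff_of_false hv hi

end HypSVD

open HypSVD in
/-- Hyperbolic SVD, real case: `G = O Σ V` with `O` orthogonal, `Σ` positive diagonal,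
and `V` indefinite orthogonal with respect to `I_{p,q} = diag(I_p, -I_q)`. -/
theorem hyperbolic_svd_real (p q : ℕ) (G : Matrix (Fin (p + q)) (Fin (p + q)) ℝ)
    (hG : IsUnit G.det) :
    ∃ (O V : Matrix (Fin (p + q)) (Fin (p + q)) ℝ) (σ : Fin (p + q) → ℝ),
      Oᵀ * O = 1 ∧
      Vᵀ * Matrix.diagonal (fun (i : Fin (p + q)) => if (i : ℕ) < p then (1 : ℝ) else -1) * V =
        Matrix.diagonal (fun (i : Fin (p + q)) => if (i : ℕ) < p then (1 : ℝ) else -1) ∧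
      (∀ i, 0 < σ i) ∧
      G = O * Matrix.diagonal σ * V := by
  classical
  set Jm : Matrix (Fin (p+q)) (Fin (p+q)) ℝ :=
    Matrix.diagonal (fun i : Fin (p+q) => if (i:ℕ) < p then (1:ℝ) else -1) with hJm
  have hJJ : Jm * Jm = 1 := by
    rw [hJm, diagonal_mul_diagonal, ← diagonal_one]
    refine congrArg Matrix.diagonal ?_
    funext i
    by_cases h : (i:ℕ) < p <;> simp [h]
  have hJt : Jmᵀ = Jm := diagonal_transpose _
  have hA : (G * Jm * Gᵀ).IsHermitian := by
    show (G * Jm * Gᵀ)ᴴ = G * Jm * Gᵀ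
    rw [conjTranspose_eq_transpose_of_trivial, transpose_mul, transpose_mul,
      transpose_transpose, hJt, ← mul_assoc]
  set d : Fin (p+q) → ℝ := hA.eigenvalues with hdd
  set U : Matrix (Fin (p+q)) (Fin (p+q)) ℝ :=
    ((Matrix.IsHermitian.eigenvectorUnitary hA : Matrix.unitaryGroup (Fin (p+q)) ℝ) :
      Matrix (Fin (p+q)) (Fin (p+q)) ℝ) with hUdef
  have hsU : star U = Uᵀ := by
    rw [Matrix.star_eq_conjTranspose, conjTranspose_eq_transpose_of_trivial]
  have hU1 : Uᵀ * U = 1 := by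
    rw [← hsU]
    exact Matrix.mem_unitaryGroup_iff'.mp (Matrix.IsHermitian.eigenvectorUnitary hA).2
  have hU2 : U * Uᵀ = 1 := by
    rw [← hsU]
    exact Matrix.mem_unitaryGroup_iff.mp (Matrix.IsHermitian.eigenvectorUnitary hA).2
  have hspec : G * Jm * Gᵀ = U * Matrix.diagonal d * Uᵀ := by
    have h := hA.spectral_theorem
    rw [← hsU]
    rw [RCLike.ofReal_real_eq_id] at h
    simpa using h
  have hdetU : IsUnit U.det := Matrix.isUnit_det_of_left_inverse hU1
  have hdetJ : IsUnit Jm.det := Matrix.isUnit_det_of_left_inverse hJJ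
  have hdetA : IsUnit (G * Jm * Gᵀ).det := by
    rw [Matrix.det_mul, Matrix.det_mul, Matrix.det_transpose]
    exact (hG.mul hdetJ).mul hG
  have hd : ∀ i, d i ≠ 0 := by
    intro i hi
    have h := hA.det_eq_prod_eigenvalues
    rw [h] at hdetA
    have h2 : (∏ j, d j) ≠ 0 := by
      simpa using hdetA.ne_zero
    exact h2 (Finset.prod_eq_zero (Finset.mem_univ i) hi)
  have hcard := inertia p q G hG U hdetU d hd hspec.symm
  obtain ⟨e, he⟩ := perm_exists p q d hcard
  set O : Matrix (Fin (p+q)) (Fin (p+q)) ℝ := U.submatrix id ⇑e with hO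
  have hOt : Oᵀ = Uᵀ.submatrix ⇑e id := by rw [hO, transpose_submatrix]
  have hOO : Oᵀ * O = 1 := by
    rw [hO, hOt, ← Matrix.submatrix_mul Uᵀ U ⇑e id ⇑e Function.bijective_id, hU1,
      submatrix_one_equiv]
  have hOOt : O * Oᵀ = 1 := mul_eq_one_comm.mp hOO
  have hOD : O * Matrix.diagonal (d ∘ ⇑e) * Oᵀ = G * Jm * Gᵀ := by
    rw [hO, hOt, ← Matrix.submatrix_diagonal_equiv,
      ← Matrix.submatrix_mul U (Matrix.diagonal d) id ⇑e ⇑e e.bijective,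
      ← Matrix.submatrix_mul _ Uᵀ id ⇑e id e.bijective, Matrix.submatrix_id_id]
    exact hspec.symm
  set s : Fin (p+q) → ℝ := fun i => Real.sqrt |d (e i)| with hs
  have hspos : ∀ i, 0 < s i := fun i => Real.sqrt_pos.mpr (abs_pos.mpr (hd (e i)))
  set V : Matrix (Fin (p+q)) (Fin (p+q)) ℝ :=
    Matrix.diagonal (fun i => (s i)⁻¹) * Oᵀ * G with hV
  have hss : Matrix.diagonal s * Matrix.diagonal (fun i => (s i)⁻¹) = 1 := by
    rw [diagonal_mul_diagonal, ← diagonal_one]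
    refine congrArg Matrix.diagonal ?_
    funext i
    exact mul_inv_cancel₀ (hspos i).ne'
  have key1 : Matrix.diagonal (fun i => (s i)⁻¹) * Jm * Matrix.diagonal (fun i => (s i)⁻¹)
      = Matrix.diagonal (fun i => (d (e i))⁻¹) := by
    rw [hJm, diagonal_mul_diagonal, diagonal_mul_diagonal]
    refine congrArg Matrix.diagonal ?_
    funext i
    by_cases h : (i:ℕ) < p
    · have hdpos : 0 < d (e i) := (he i).mpr h
      have h2 : s i * s i = d (e i) := by
        simp only [hs]
        rw [Real.mul_self_sqrt (abs_nonneg _), abs_of_pos hdpos]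
      simp only [h, if_true]
      rw [mul_one, ← mul_inv, h2]
    · have hdneg : d (e i) < 0 := by
        have h3 : ¬ 0 < d (e i) := fun hp => h ((he i).mp hp)
        exact lt_of_le_of_ne (not_lt.mp h3) (hd (e i))
      have h2 : s i * s i = -(d (e i)) := by
        simp only [hs]
        rw [Real.mul_self_sqrt (abs_nonneg _), abs_of_neg hdneg]
      simp only [h, if_false]
      have h4 : (s i)⁻¹ * -1 * (s i)⁻¹ = -((s i * s i)⁻¹) := by ring
      rw [h4, h2, inv_neg, neg_neg]
  have key2 : (G * Jm * Gᵀ) * (O * Matrix.diagonal (fun i => (d (e i))⁻¹) * Oᵀ) = 1 := by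
    rw [← hOD]
    simp only [mul_assoc]
    rw [← mul_assoc Oᵀ O, hOO, one_mul, ← mul_assoc (Matrix.diagonal (d ∘ ⇑e)),
      diagonal_mul_diagonal]
    have h5 : Matrix.diagonal (fun i => (d ∘ ⇑e) i * (d (e i))⁻¹) = 1 := by
      rw [← diagonal_one]
      refine congrArg Matrix.diagonal ?_
      funext i
      exact mul_inv_cancel₀ (hd (e i))
    rw [h5, one_mul, hOOt]
  have hGt : IsUnit Gᵀ.det := by rwa [Matrix.det_transpose]
  have key3 : (G * Jm * Gᵀ)⁻¹ = (Gᵀ)⁻¹ * (Jm * G⁻¹) := by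
    apply Matrix.inv_eq_right_inv
    simp only [mul_assoc]
    rw [← mul_assoc Gᵀ (Gᵀ)⁻¹, Matrix.mul_nonsing_inv _ hGt, one_mul,
      ← mul_assoc Jm Jm, hJJ, one_mul, Matrix.mul_nonsing_inv _ hG]
  have key2' : O * Matrix.diagonal (fun i => (d (e i))⁻¹) * Oᵀ = (G * Jm * Gᵀ)⁻¹ :=
    (Matrix.inv_eq_right_inv key2).symm
  have hVt : Vᵀ = Gᵀ * (O * Matrix.diagonal (fun i => (s i)⁻¹)) := by
    rw [hV, transpose_mul, transpose_mul, transpose_transpose, diagonal_transpose]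
  refine ⟨O, V, s, hOO, ?_, hspos, ?_⟩
  · rw [hVt, hV]
    simp only [mul_assoc]
    rw [← mul_assoc (Matrix.diagonal (fun i => (s i)⁻¹)) Jm,
      ← mul_assoc (Matrix.diagonal (fun i => (s i)⁻¹) * Jm), key1]
    rw [← mul_assoc O, ← mul_assoc (O * Matrix.diagonal fun i => (d (e i))⁻¹)]
    rw [key2', key3, ← mul_assoc, ← mul_assoc, Matrix.mul_nonsing_inv _ hGt, one_mul,
      mul_assoc, Matrix.nonsing_inv_mul _ hG, mul_one]
  · rw [hV]
    simp only [mul_assoc]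
    rw [← mul_assoc (Matrix.diagonal s), hss, one_mul, ← mul_assoc O Oᵀ G, hOOt, one_mul]
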